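/- Let V be a type and let w : V → V → ℕ be the edge-multiplicity function of a directed multigraph such that every vertex has finite out-degree (for each u the set {v : w(u,v) ≠ 0} is finite). Suppose there is a finite subset S ⊆ V such that: (i) every vertex not in S has out-degree at most 1 and in-degree at most 1; (ii) every based closed directed walk of positive length passes through a vertex of S; and (iii) there exists at least one based closed directed walk of positive length. Then for every n ≥ 1 the number c(n) of based closed directed walks of length n is finite, for every vertex i the number p(i,n) of directed walks of length n starting at i is finite, and limsup_{n→∞} c(n)^{1/n} = sup_{i ∈ V} limsup_{n→∞} p(i,n)^{1/n}; moreover this supremum is attained at some vertex of S. -/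

import Mathlib

open scoped Classical

/-- `walkCount w n i k` is the number of directed walks of length `n` from `i` to `k` in the
directed multigraph with edge-multiplicity function `w`, counted with multiplicity: the walks
along a fixed vertex sequence `i = v₀, v₁, …, vₙ = k` are counted `∏_{t<n} w(v_t, v_{t+1})`
times. -/
noncomputable def walkCount {V : Type*} (w : V → V → ℕ) : ℕ → V → V → ℕ
  | 0, i, k => if i = k then 1 else 0
  | n + 1, i, k => ∑ᶠ v, w i v * walkCount w n v k

/-- `walkCountIn w C n i k` is the number of directed walks of length `n` from `i` to `k`,
counted with multiplicity, all of whose vertices lie in the set `C`. -/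
noncomputable def walkCountIn {V : Type*} (w : V → V → ℕ) (C : Set V) : ℕ → V → V → ℕ
  | 0, i, k => if i = k ∧ i ∈ C then 1 else 0
  | n + 1, i, k => if i ∈ C then ∑ᶠ v, w i v * walkCountIn w C n v k else 0

open scoped ENNReal

/-!
Let `c n` count the closed walks of length `n` and `p i n` the walks of length `n` from `i`.
Cutting a closed walk at its last visit to `S` and rotating it gives
`c n ≤ (n + 1) * ∑ s ∈ S, p s n`, so `c` grows no faster than `p s` for some `s ∈ S`.
Conversely, suppose `c n ≤ C * x ^ n`. Outside `S` walks are deterministic, so a walk from `i`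
is fixed, up to a factor `outDegree`, by its part up to its last visit to `S`. Walks ending in
`S` are bounded by induction on the set `T ⊆ S` of `S`-vertices they may use: cutting at the last
return to the starting vertex splits off a closed walk, and what is left uses one vertex of `T`
fewer. Each step costs a factor `n + 1`, so `p i n ≤ K * (n + 1) ^ B * x ^ n`.
-/

open Finset Filter
open scoped NNReal

lemma sum_range_pow_mul_pow_sub {R : Type*} [CommSemiring R] (x : R) (n : ℕ) :
    ∑ β ∈ range (n + 1), x ^ β * x ^ (n - β) = (n + 1) * x ^ n := by
  rw [sum_congr rfl fun β hβ => pow_mul_pow_sub x (mem_range_succ_iff.1 hβ), sum_const,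
    card_range, nsmul_eq_mul]
  push_cast
  ring

lemma monotone_mul_pow {M x : ℝ≥0} (hx : 1 ≤ x) (a b : ℕ) :
    Monotone fun n : ℕ => M ^ a * ((n : ℝ≥0) + 1) ^ b * x ^ n := fun m n hmn => by
  dsimp only
  gcongr

noncomputable def growthRate (a : ℕ → ℕ) : ℝ≥0∞ :=
  limsup (fun n : ℕ => (a n : ℝ≥0∞) ^ (1 / (n : ℝ))) atTop

lemma growthRate_le_of_eventually_le_pow {a : ℕ → ℕ} {y : ℝ≥0∞}
    (h : ∀ᶠ n in atTop, (a n : ℝ≥0∞) ≤ y ^ n) : growthRate a ≤ y := by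
  refine limsup_le_of_le (by isBoundedDefault) ?_
  filter_upwards [h, eventually_ne_atTop 0] with n hn hn0
  calc (a n : ℝ≥0∞) ^ (1 / (n : ℝ)) ≤ (y ^ n) ^ (1 / (n : ℝ)) :=
        ENNReal.rpow_le_rpow hn (by positivity)
    _ = y := by rw [one_div, ENNReal.pow_rpow_inv_natCast hn0]

lemma eventually_mul_pow_le_pow {x y : ℝ≥0} (hxy : x < y) (K : ℝ≥0) (B : ℕ) :
    ∀ᶠ n : ℕ in atTop, K * ((n : ℝ≥0) + 1) ^ B * x ^ n ≤ y ^ n := by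
  have hy : 0 < (y : ℝ) := (NNReal.coe_nonneg x).trans_lt (by exact_mod_cast hxy)
  have hr : |(x / y : ℝ)| < 1 := by
    rw [abs_of_nonneg (by positivity), div_lt_one hy]
    exact_mod_cast hxy
  have hlim : Tendsto (fun n : ℕ => (K : ℝ) * 2 ^ B * ((n : ℝ) ^ B * (x / y : ℝ) ^ n)) atTop
      (nhds 0) := by
    simpa using (tendsto_pow_const_mul_const_pow_of_abs_lt_one B hr).const_mul ((K : ℝ) * 2 ^ B)
  filter_upwards [hlim.eventually_lt_const one_pos, eventually_ge_atTop 1] with n hn hn1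
  rw [← NNReal.coe_le_coe]
  push_cast
  have hn1' : (1 : ℝ) ≤ n := by exact_mod_cast hn1
  calc (K : ℝ) * ((n : ℝ) + 1) ^ B * (x : ℝ) ^ n ≤ K * (2 * n) ^ B * (x : ℝ) ^ n := by
        gcongr
        linarith
    _ = (K * 2 ^ B * ((n : ℝ) ^ B * (x / y : ℝ) ^ n)) * (y : ℝ) ^ n := by
        rw [div_pow, mul_pow]
        field_simp
    _ ≤ 1 * (y : ℝ) ^ n := by gcongr
    _ = (y : ℝ) ^ n := one_mul _

lemma growthRate_le_of_le_mul_pow {a : ℕ → ℕ} {K x : ℝ≥0} {B : ℕ}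
    (h : ∀ n ≥ 1, (a n : ℝ≥0) ≤ K * ((n : ℝ≥0) + 1) ^ B * x ^ n) : growthRate a ≤ x := by
  refine ENNReal.le_of_forall_pos_le_add fun ε hε _ => ?_
  rw [← ENNReal.coe_add]
  refine growthRate_le_of_eventually_le_pow ?_
  filter_upwards [eventually_mul_pow_le_pow (lt_add_of_pos_right x hε) K B,
    eventually_ge_atTop 1] with n hn hn1
  exact_mod_cast (h n hn1).trans hn

lemma exists_le_mul_pow_of_growthRate_lt {a : ℕ → ℕ} {x : ℝ≥0} (h : growthRate a < x) :
    ∃ C : ℝ≥0, ∀ n, (a n : ℝ≥0) ≤ C * x ^ n := by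
  have hx : x ≠ 0 := by
    rintro rfl
    exact not_lt_zero h
  obtain ⟨N, hN⟩ :=
    eventually_atTop.1 ((eventually_lt_of_limsup_lt h).and (eventually_ne_atTop 0))
  refine ⟨1 + ∑ m ∈ range N, (a m : ℝ≥0) / x ^ m, fun n => ?_⟩
  rcases lt_or_ge n N with hn | hn
  · calc (a n : ℝ≥0) = (a n : ℝ≥0) / x ^ n * x ^ n :=
          (div_mul_cancel₀ _ (pow_ne_zero n hx)).symm
      _ ≤ _ := by
        gcongr
        exact le_add_left (single_le_sum (f := fun m => (a m : ℝ≥0) / x ^ m)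
          (fun m _ => zero_le) (mem_range.2 hn))
  · obtain ⟨hlt, hn0⟩ := hN n hn
    have : (a n : ℝ≥0∞) ≤ (x : ℝ≥0∞) ^ n := calc
      (a n : ℝ≥0∞) = ((a n : ℝ≥0∞) ^ (1 / (n : ℝ))) ^ n := by
        rw [one_div, ENNReal.rpow_inv_natCast_pow hn0]
      _ ≤ (x : ℝ≥0∞) ^ n := by gcongr
    calc (a n : ℝ≥0) ≤ x ^ n := by exact_mod_cast this
      _ ≤ _ := le_mul_of_one_le_left zero_le le_self_add

lemma one_le_growthRate {a : ℕ → ℕ} (h : ∃ᶠ n in atTop, 1 ≤ a n) : 1 ≤ growthRate a :=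
  le_limsup_of_frequently_le (h.mono fun n hn => calc
    (1 : ℝ≥0∞) = 1 ^ (1 / (n : ℝ)) := (ENNReal.one_rpow _).symm
    _ ≤ (a n : ℝ≥0∞) ^ (1 / (n : ℝ)) := by gcongr; exact_mod_cast hn) (by isBoundedDefault)

lemma growthRate_le_of_forall_pow_bound {a b : ℕ → ℕ} (hb : 1 ≤ growthRate b)
    (h : ∀ x C : ℝ≥0, 1 ≤ x → (∀ n, (b n : ℝ≥0) ≤ C * x ^ n) →
      ∃ (K : ℝ≥0) (B : ℕ), ∀ n, (a n : ℝ≥0) ≤ K * ((n : ℝ≥0) + 1) ^ B * x ^ n) :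
    growthRate a ≤ growthRate b := by
  refine le_of_forall_gt_imp_ge_of_dense fun y hy => ?_
  induction y using ENNReal.recTopCoe with
  | top => exact le_top
  | coe x =>
    obtain ⟨C, hC⟩ := exists_le_mul_pow_of_growthRate_lt hy
    obtain ⟨K, B, hK⟩ := h x C (by exact_mod_cast hb.trans hy.le) hC
    exact growthRate_le_of_le_mul_pow fun n _ => hK n

lemma growthRate_le_sup_of_le_mul_sum {ι : Type*} (J : Finset ι) {a : ℕ → ℕ} {b : ι → ℕ → ℕ}
    (h : ∀ n ≥ 1, a n ≤ (n + 1) * ∑ j ∈ J, b j n) :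
    growthRate a ≤ J.sup fun j => growthRate (b j) := by
  refine le_of_forall_gt_imp_ge_of_dense fun y hy => ?_
  induction y using ENNReal.recTopCoe with
  | top => exact le_top
  | coe x =>
    have : ∀ j ∈ J, ∃ C : ℝ≥0, ∀ n, (b j n : ℝ≥0) ≤ C * x ^ n := fun j hj =>
      exists_le_mul_pow_of_growthRate_lt ((le_sup (f := fun j => growthRate (b j)) hj).trans_lt hy)
    choose! C hC using this
    refine growthRate_le_of_le_mul_pow (K := ∑ j ∈ J, C j) (B := 1) fun n hn => ?_
    calc (a n : ℝ≥0) ≤ ((n : ℝ≥0) + 1) * ∑ j ∈ J, (b j n : ℝ≥0) := by exact_mod_cast h n hn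
      _ ≤ ((n : ℝ≥0) + 1) * ∑ j ∈ J, C j * x ^ n := by
        gcongr with j hj
        exact hC j hj n
      _ = _ := by rw [← sum_mul]; ring

section

variable {V : Type*} {w : V → V → ℕ}

noncomputable def outDegree (w : V → V → ℕ) (u : V) : ℕ := ∑ᶠ v, w u v

/-- Walks of length `n` from `a` to `k` all of whose vertices after the first lie in `C`. -/
noncomputable def walkCountTailIn (w : V → V → ℕ) (C : Set V) : ℕ → V → V → ℕ
  | 0, a, k => if a = k then 1 else 0
  | n + 1, a, k => ∑ᶠ u, w a u * walkCountIn w C n u k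

lemma walkCountIn_univ : ∀ (n : ℕ) (i k : V), walkCountIn w Set.univ n i k = walkCount w n i k
  | 0, i, k => by simp [walkCountIn, walkCount]
  | n + 1, i, k => by simp [walkCountIn, walkCount, walkCountIn_univ n]

lemma walkCountIn_eq_walkCountTailIn {C : Set V} {a : V} (ha : a ∈ C) :
    ∀ (n : ℕ) (k : V), walkCountIn w C n a k = walkCountTailIn w C n a k
  | 0, k => by simp [walkCountIn, walkCountTailIn, ha]
  | n + 1, k => by simp [walkCountIn, walkCountTailIn, ha]

lemma walkCountIn_of_notMem {C : Set V} {i : V} (hi : i ∉ C) (n : ℕ) (k : V) :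
    walkCountIn w C n i k = 0 := by
  cases n <;> simp [walkCountIn, hi]

lemma walkCountIn_of_notMem_right {C : Set V} {k : V} (hk : k ∉ C) :
    ∀ (n : ℕ) (i : V), walkCountIn w C n i k = 0
  | 0, i => by
      simp only [walkCountIn]
      rw [if_neg]
      rintro ⟨rfl, hi⟩
      exact hk hi
  | n + 1, i => by simp [walkCountIn, walkCountIn_of_notMem_right hk n]

section FiniteOutDegree

variable (hfin : ∀ u : V, {v | w u v ≠ 0}.Finite)
include hfin

lemma finsum_mul_eq_sum (u : V) (g : V → ℕ) :
    ∑ᶠ v, w u v * g v = ∑ v ∈ (hfin u).toFinset, w u v * g v :=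
  finsum_eq_sum_of_support_subset _ fun v hv => by
    simpa using left_ne_zero_of_mul hv

lemma outDegree_eq_sum (u : V) : outDegree w u = ∑ v ∈ (hfin u).toFinset, w u v := by
  simpa [outDegree] using finsum_mul_eq_sum hfin u 1

lemma walkCount_succ (n : ℕ) (i k : V) :
    walkCount w (n + 1) i k = ∑ v ∈ (hfin i).toFinset, w i v * walkCount w n v k :=
  finsum_mul_eq_sum hfin i _

lemma walkCountIn_succ {C : Set V} {i : V} (hi : i ∈ C) (n : ℕ) (k : V) :
    walkCountIn w C (n + 1) i k = ∑ v ∈ (hfin i).toFinset, w i v * walkCountIn w C n v k := by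
  rw [walkCountIn, if_pos hi, finsum_mul_eq_sum hfin]

lemma walkCountTailIn_succ (C : Set V) (n : ℕ) (a k : V) :
    walkCountTailIn w C (n + 1) a k =
      ∑ v ∈ (hfin a).toFinset, w a v * walkCountIn w C n v k :=
  finsum_mul_eq_sum hfin a _

lemma finite_walkCount_ne_zero : ∀ (n : ℕ) (i : V), {k | walkCount w n i k ≠ 0}.Finite
  | 0, i => (Set.finite_singleton i).subset fun k hk => by
      by_contra h
      simp_all [walkCount, eq_comm]
  | n + 1, i => ((hfin i).biUnion fun v _ => finite_walkCount_ne_zero n v).subset fun k hk => by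
      rw [Set.mem_ofPred_eq, walkCount_succ hfin] at hk
      obtain ⟨v, hv, hvk⟩ := exists_ne_zero_of_sum_ne_zero hk
      exact Set.mem_biUnion (by simpa using hv) (right_ne_zero_of_mul hvk)

lemma walkCountIn_le_walkCount (C : Set V) :
    ∀ (n : ℕ) (i k : V), walkCountIn w C n i k ≤ walkCount w n i k
  | 0, i, k => by simp only [walkCountIn, walkCount]; split_ifs <;> simp_all
  | n + 1, i, k => by
      by_cases hi : i ∈ C
      · rw [walkCountIn_succ hfin hi, walkCount_succ hfin]
        gcongr with v
        exact walkCountIn_le_walkCount C n v k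
      · simp [walkCountIn_of_notMem hi]

lemma walkCountTailIn_le_walkCount (C : Set V) :
    ∀ (n : ℕ) (i k : V), walkCountTailIn w C n i k ≤ walkCount w n i k
  | 0, i, k => le_of_eq rfl
  | n + 1, i, k => by
      rw [walkCountTailIn_succ hfin, walkCount_succ hfin]
      gcongr with v
      exact walkCountIn_le_walkCount hfin C n v k

lemma walkCountTailIn_succ_le {C : Set V} {n : ℕ} {k : V} {g : ℝ≥0}
    (h : ∀ u, (walkCountIn w C n u k : ℝ≥0) ≤ g) (a : V) :
    (walkCountTailIn w C (n + 1) a k : ℝ≥0) ≤ outDegree w a * g := by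
  rw [walkCountTailIn_succ hfin, outDegree_eq_sum hfin]
  push_cast
  rw [sum_mul]
  gcongr with u
  exact h u

lemma sum_walkCount_mul_walkCount_le (F : Finset V) (b : ℕ) (k : V) :
    ∀ (a : ℕ) (i : V), ∑ j ∈ F, walkCount w a i j * walkCount w b j k ≤ walkCount w (a + b) i k
  | 0, i => by
      simp only [walkCount, ite_mul, one_mul, zero_mul, sum_ite_eq, zero_add]
      split_ifs <;> simp
  | a + 1, i => by
      rw [Nat.add_right_comm, walkCount_succ hfin]
      simp only [walkCount_succ hfin a, sum_mul, mul_assoc]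
      rw [sum_comm]
      gcongr with v
      rw [← mul_sum]
      exact Nat.mul_le_mul_left _ (sum_walkCount_mul_walkCount_le F b k a v)

lemma walkCount_mul_walkCount_le (a b : ℕ) (i j k : V) :
    walkCount w a i j * walkCount w b j k ≤ walkCount w (a + b) i k := by
  simpa using sum_walkCount_mul_walkCount_le hfin {j} b k a i

lemma one_le_walkCount_mul {n : ℕ} {i : V} (h : 1 ≤ walkCount w n i i) :
    ∀ m : ℕ, 1 ≤ walkCount w (m * n) i i
  | 0 => by simp [walkCount]
  | m + 1 => by
      rw [Nat.succ_mul]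
      exact (one_le_mul_of_one_le_of_one_le (one_le_walkCount_mul h m) h).trans
        (walkCount_mul_walkCount_le hfin _ _ i i i)

end FiniteOutDegree

section LastVisit

variable (hfin : ∀ u : V, {v | w u v ≠ 0}.Finite) (C : Set V) (A : Finset V)

lemma walkCountTailIn_le_add_sum {v : V} (hv : v ∈ C) (n : ℕ) (k : V) :
    walkCountTailIn w (C \ ↑A) n v k ≤ walkCountIn w (C \ ↑A) n v k +
      ∑ a ∈ A, walkCountIn w C 0 v a * walkCountTailIn w (C \ ↑A) n a k := by
  by_cases hvA : v ∈ A
  · refine le_add_left (single_le_sum (f := fun a => walkCountIn w C 0 v a * _)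
      (fun _ _ => Nat.zero_le _) hvA |>.trans' ?_)
    simp [walkCountIn, hv]
  · rw [walkCountIn_eq_walkCountTailIn (by exact ⟨hv, hvA⟩)]
    exact le_self_add

include hfin in
/-- Decomposition of a walk in `C` at its last visit to `A`. -/
lemma walkCountIn_le_sum_lastVisit : ∀ (n : ℕ) (v k : V),
    walkCountIn w C n v k ≤ walkCountIn w (C \ ↑A) n v k +
      ∑ t ∈ range (n + 1), ∑ a ∈ A,
        walkCountIn w C t v a * walkCountTailIn w (C \ ↑A) (n - t) a k
  | 0, v, k => by
      by_cases hv : v ∈ C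
      · rw [walkCountIn_eq_walkCountTailIn hv, sum_range_one]
        exact walkCountTailIn_le_add_sum C A hv 0 k
      · simp [walkCountIn_of_notMem hv]
  | n + 1, v, k => by
      by_cases hv : v ∈ C
      · calc walkCountIn w C (n + 1) v k
            ≤ ∑ u ∈ (hfin v).toFinset, w v u * (walkCountIn w (C \ ↑A) n u k +
                ∑ t ∈ range (n + 1), ∑ a ∈ A,
                  walkCountIn w C t u a * walkCountTailIn w (C \ ↑A) (n - t) a k) := by
              rw [walkCountIn_succ hfin hv]
              gcongr with u
              exact walkCountIn_le_sum_lastVisit n u k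
          _ = walkCountTailIn w (C \ ↑A) (n + 1) v k + ∑ t ∈ range (n + 1), ∑ a ∈ A,
                walkCountIn w C (t + 1) v a * walkCountTailIn w (C \ ↑A) (n - t) a k := by
              simp only [mul_add, sum_add_distrib, walkCountTailIn_succ hfin,
                walkCountIn_succ hfin hv, mul_sum, sum_mul, mul_assoc]
              congr 1
              rw [sum_comm]
              refine sum_congr rfl fun t _ => sum_comm
          _ ≤ _ := by
              rw [sum_range_succ' _ (n + 1), add_comm _ (∑ a ∈ A, _), ← add_assoc]
              simp only [Nat.add_sub_add_right]
              gcongr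
              exact walkCountTailIn_le_add_sum C A hv (n + 1) k
      · simp [walkCountIn_of_notMem hv]

include hfin in
lemma walkCountIn_le_sum_lastReturn (n : ℕ) (a k : V) :
    walkCountIn w C n a k ≤
      ∑ t ∈ range (n + 1), walkCountIn w C t a a * walkCountTailIn w (C \ {a}) (n - t) a k := by
  simpa [walkCountIn_of_notMem (C := C \ {a}) (by simp : a ∉ C \ {a})] using
    walkCountIn_le_sum_lastVisit hfin C {a} n a k

end LastVisit

section Deterministic

variable {S : Set V} (hout : ∀ u ∉ S, ∃ v₀, w u v₀ ≤ 1 ∧ ∀ v, v ≠ v₀ → w u v = 0)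
include hout

lemma exists_walkCountIn_succ_le (C : Set V) {i : V} (hi : i ∉ S) :
    ∃ v, ∀ (n : ℕ) (k : V), walkCountIn w C (n + 1) i k ≤ walkCountIn w C n v k := by
  obtain ⟨v₀, hv₀, hzero⟩ := hout i hi
  refine ⟨v₀, fun n k => ?_⟩
  simp only [walkCountIn]
  split_ifs
  · rw [finsum_eq_single _ v₀ fun v hv => by simp [hzero v hv]]
    exact (Nat.mul_le_mul_right _ hv₀).trans (one_mul _).le
  · exact Nat.zero_le _

lemma sum_walkCountIn_compl_le_one (F : Finset V) :
    ∀ (n : ℕ) (u : V), ∑ k ∈ F, walkCountIn w Sᶜ n u k ≤ 1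
  | 0, u => calc
      ∑ k ∈ F, walkCountIn w Sᶜ 0 u k ≤ ∑ k ∈ F, if u = k then 1 else 0 :=
        sum_le_sum fun k _ => by simp only [walkCountIn]; split_ifs <;> simp_all
      _ ≤ 1 := by rw [sum_ite_eq]; split_ifs <;> simp
  | n + 1, u => by
      by_cases hu : u ∈ S
      · simp [walkCountIn_of_notMem (C := Sᶜ) (not_not_intro hu)]
      · obtain ⟨v, hv⟩ := exists_walkCountIn_succ_le hout Sᶜ hu
        exact (sum_le_sum fun k _ => hv n k).trans (sum_walkCountIn_compl_le_one F n v)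

lemma sum_walkCountTailIn_compl_le (hfin : ∀ u : V, {v | w u v ≠ 0}.Finite) (F : Finset V) :
    ∀ (n : ℕ) (s : V), ∑ k ∈ F, walkCountTailIn w Sᶜ n s k ≤ max 1 (outDegree w s)
  | 0, s => by
      simp only [walkCountTailIn, sum_ite_eq]
      split_ifs <;> simp
  | n + 1, s => by
      simp only [walkCountTailIn_succ hfin]
      rw [sum_comm, outDegree_eq_sum hfin]
      refine le_max_of_le_right (sum_le_sum fun v _ => ?_)
      rw [← mul_sum]
      exact (Nat.mul_le_mul_left _ (sum_walkCountIn_compl_le_one hout F n v)).trans (mul_one _).le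

lemma walkCountIn_le_of_forall_mem {C : Set V} {k : V} (hk : k ∈ S) {f : ℕ → ℝ≥0}
    (hf : Monotone f) (h : ∀ s ∈ S, ∀ n, (walkCountIn w C n s k : ℝ≥0) ≤ f n) (n : ℕ) (i : V) :
    (walkCountIn w C n i k : ℝ≥0) ≤ f n := by
  induction n generalizing i with
  | zero =>
      by_cases hi : i ∈ S
      · exact h i hi 0
      · have : i ≠ k := fun hik => hi (hik ▸ hk)
        simp [walkCountIn, this]
  | succ n ih =>
      by_cases hi : i ∈ S
      · exact h i hi _
      · obtain ⟨v, hv⟩ := exists_walkCountIn_succ_le hout C hi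
        exact (Nat.cast_le.2 (hv n k)).trans ((ih v).trans (hf n.le_succ))

end Deterministic

section ThroughS

variable (hfin : ∀ u : V, {v | w u v ≠ 0}.Finite) {S : Set V} (hS : S.Finite)
include hfin

lemma walkCount_le_sum_lastVisit (n : ℕ) (i k : V) :
    walkCount w n i k ≤ walkCountIn w Sᶜ n i k + ∑ t ∈ range (n + 1), ∑ s ∈ hS.toFinset,
      walkCount w t i s * walkCountTailIn w Sᶜ (n - t) s k := by
  simpa only [walkCountIn_univ, ← Set.compl_eq_univ_sdiff, hS.coe_toFinset] using
    walkCountIn_le_sum_lastVisit hfin Set.univ hS.toFinset n i k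

lemma walkCount_self_le {n : ℕ} {i : V} (hthrough : walkCountIn w Sᶜ n i i = 0) :
    walkCount w n i i ≤ ∑ t ∈ range (n + 1), ∑ s ∈ hS.toFinset,
      walkCount w t i s * walkCount w (n - t) s i := by
  refine (walkCount_le_sum_lastVisit hfin hS n i i).trans ?_
  rw [hthrough, zero_add]
  gcongr
  exact walkCountTailIn_le_walkCount hfin _ _ _ _

variable {n : ℕ} (hthrough : ∀ i, walkCountIn w Sᶜ n i i = 0)
include hS hthrough

lemma finite_walkCount_self_ne_zero : {i | walkCount w n i i ≠ 0}.Finite := by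
  refine (hS.biUnion fun s _ => (Set.finite_Iic n).biUnion fun r _ =>
    finite_walkCount_ne_zero hfin r s).subset fun i hi => ?_
  obtain ⟨t, ht, hts⟩ := exists_ne_zero_of_sum_ne_zero fun h0 =>
    hi (Nat.eq_zero_of_le_zero (h0 ▸ walkCount_self_le hfin hS (hthrough i)))
  obtain ⟨s, hs, hsi⟩ := exists_ne_zero_of_sum_ne_zero hts
  exact Set.mem_biUnion (hS.mem_toFinset.1 hs)
    (Set.mem_biUnion (Set.mem_Iic.2 (n.sub_le t)) (right_ne_zero_of_mul hsi))

lemma sum_walkCount_self_le (F : Finset V) :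
    ∑ i ∈ F, walkCount w n i i ≤ (n + 1) * ∑ s ∈ hS.toFinset, walkCount w n s s := calc
  ∑ i ∈ F, walkCount w n i i
      ≤ ∑ i ∈ F, ∑ t ∈ range (n + 1), ∑ s ∈ hS.toFinset,
          walkCount w t i s * walkCount w (n - t) s i :=
        sum_le_sum fun i _ => walkCount_self_le hfin hS (hthrough i)
  _ = ∑ t ∈ range (n + 1), ∑ s ∈ hS.toFinset, ∑ i ∈ F,
          walkCount w (n - t) s i * walkCount w t i s := by
        rw [sum_comm]
        refine sum_congr rfl fun t _ => ?_
        rw [sum_comm]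
        simp only [mul_comm]
  _ ≤ ∑ t ∈ range (n + 1), ∑ s ∈ hS.toFinset, walkCount w n s s := by
        gcongr with t ht s
        simpa [Nat.sub_add_cancel (mem_range_succ_iff.1 ht)] using
          sum_walkCount_mul_walkCount_le hfin F t s (n - t) s
  _ = (n + 1) * ∑ s ∈ hS.toFinset, walkCount w n s s := by simp

lemma finsum_walkCount_self_le :
    ∑ᶠ i, walkCount w n i i ≤ (n + 1) * ∑ s ∈ hS.toFinset, ∑ᶠ k, walkCount w n s k := by
  rw [finsum_eq_sum _ (finite_walkCount_self_ne_zero hfin hS hthrough)]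
  refine (sum_walkCount_self_le hfin hS hthrough _).trans ?_
  gcongr with s
  exact single_le_finsum s (finite_walkCount_ne_zero hfin n s) fun _ => Nat.zero_le _

lemma walkCount_self_le_finsum (i : V) : walkCount w n i i ≤ ∑ᶠ j, walkCount w n j j :=
  single_le_finsum i (finite_walkCount_self_ne_zero hfin hS hthrough) fun _ => Nat.zero_le _

end ThroughS

section PathBound

variable (hfin : ∀ u : V, {v | w u v ≠ 0}.Finite) {S : Set V}
  (hout : ∀ u ∉ S, ∃ v₀, w u v₀ ≤ 1 ∧ ∀ v, v ≠ v₀ → w u v = 0)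
include hfin hout

lemma sum_walkCount_le (hS : S.Finite) (F : Finset V) (n : ℕ) (i : V) :
    ∑ k ∈ F, walkCount w n i k ≤ 1 + ∑ t ∈ range (n + 1), ∑ s ∈ hS.toFinset,
      walkCount w t i s * max 1 (outDegree w s) := calc
  ∑ k ∈ F, walkCount w n i k
      ≤ ∑ k ∈ F, (walkCountIn w Sᶜ n i k + ∑ t ∈ range (n + 1), ∑ s ∈ hS.toFinset,
          walkCount w t i s * walkCountTailIn w Sᶜ (n - t) s k) :=
        sum_le_sum fun k _ => walkCount_le_sum_lastVisit hfin hS n i k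
  _ = ∑ k ∈ F, walkCountIn w Sᶜ n i k + ∑ t ∈ range (n + 1), ∑ s ∈ hS.toFinset,
          walkCount w t i s * ∑ k ∈ F, walkCountTailIn w Sᶜ (n - t) s k := by
        rw [sum_add_distrib, sum_comm]
        simp only [mul_sum]
        congr 1
        exact sum_congr rfl fun t _ => sum_comm
  _ ≤ _ := by
        gcongr
        · exact sum_walkCountIn_compl_le_one hout F n i
        · exact sum_walkCountTailIn_compl_le hout hfin F _ _

variable {x M : ℝ≥0} (hx : 1 ≤ x) (hM : 1 ≤ M)
  (hdeg : ∀ s ∈ S, (outDegree w s : ℝ≥0) ≤ M)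
  (hclosed : ∀ s ∈ S, ∀ n, (walkCount w n s s : ℝ≥0) ≤ M * x ^ n)
include hx hM hdeg hclosed

lemma walkCountIn_union_compl_le (T : Finset V) (hT : ↑T ⊆ S) (n : ℕ) (i : V) {k : V}
    (hk : k ∈ T) :
    (walkCountIn w (↑T ∪ Sᶜ) n i k : ℝ≥0) ≤ M ^ (2 * #T) * ((n : ℝ≥0) + 1) ^ #T * x ^ n := by
  induction T using Finset.strongInduction generalizing n i k with | H T ih => ?_
  refine walkCountIn_le_of_forall_mem hout (hT hk) (monotone_mul_pow hx _ _)
    (fun a haS n => ?_) n i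
  by_cases haT : a ∈ T
  swap
  · simp [walkCountIn_of_notMem (show a ∉ (↑T ∪ Sᶜ : Set V) by simp [haT, haS])]
  obtain ⟨m, hm⟩ : ∃ m, #T = m + 1 := ⟨_, (Nat.succ_pred_eq_of_pos (card_pos.2 ⟨a, haT⟩)).symm⟩
  have htail : ∀ γ, (walkCountTailIn w ((↑T ∪ Sᶜ) \ {a}) γ a k : ℝ≥0) ≤
      M ^ (2 * m + 1) * ((γ : ℝ≥0) + 1) ^ m * x ^ γ := by
    rintro (_ | γ)
    · simp only [walkCountTailIn]
      split_ifs <;> simp [one_le_pow₀ hM]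
    have hdiff : (↑T ∪ Sᶜ) \ {a} = (↑(T.erase a) ∪ Sᶜ : Set V) := by
      ext v
      by_cases hv : v = a <;> simp [hv, haS]
    have hsmaller : ∀ u, (walkCountIn w ((↑T ∪ Sᶜ) \ {a}) γ u k : ℝ≥0) ≤
        M ^ (2 * m) * ((γ : ℝ≥0) + 1) ^ m * x ^ γ := fun u => by
      rw [hdiff]
      by_cases hka : k = a
      · rw [walkCountIn_of_notMem_right (by simp [hka, haS])]
        simp
      · have hcard : #(T.erase a) = m := by rw [card_erase_of_mem haT, hm, Nat.add_sub_cancel]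
        simpa [hcard] using ih _ (erase_ssubset haT)
          ((coe_subset.2 (erase_subset _ _)).trans hT) γ u (mem_erase.2 ⟨hka, hk⟩)
    calc (walkCountTailIn w ((↑T ∪ Sᶜ) \ {a}) (γ + 1) a k : ℝ≥0)
        ≤ outDegree w a * (M ^ (2 * m) * ((γ : ℝ≥0) + 1) ^ m * x ^ γ) :=
          walkCountTailIn_succ_le hfin hsmaller a
      _ ≤ M * (M ^ (2 * m) * ((γ : ℝ≥0) + 1 + 1) ^ m * x ^ (γ + 1)) := by
          gcongr
          · exact hdeg a haS
          · exact le_self_add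
          · exact γ.le_succ
      _ = _ := by push_cast; ring
  calc (walkCountIn w (↑T ∪ Sᶜ) n a k : ℝ≥0)
      ≤ ∑ β ∈ range (n + 1), (M * x ^ β) *
          (M ^ (2 * m + 1) * ((n : ℝ≥0) + 1) ^ m * x ^ (n - β)) := by
        refine (Nat.cast_le.2 (walkCountIn_le_sum_lastReturn hfin _ n a k)).trans ?_
        push_cast
        gcongr with β hβ
        · exact (Nat.cast_le.2 (walkCountIn_le_walkCount hfin _ β a a)).trans (hclosed a haS β)
        · refine (htail (n - β)).trans ?_
          gcongr
          exact n.sub_le β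
    _ = M * (M ^ (2 * m + 1) * ((n : ℝ≥0) + 1) ^ m) *
          ∑ β ∈ range (n + 1), x ^ β * x ^ (n - β) := by
        rw [mul_sum]
        exact sum_congr rfl fun β _ => by ring
    _ = M ^ (2 * #T) * ((n : ℝ≥0) + 1) ^ #T * x ^ n := by
        rw [sum_range_pow_mul_pow_sub, hm]
        ring

lemma finsum_walkCount_le (hS : S.Finite) (n : ℕ) (i : V) :
    ((∑ᶠ k, walkCount w n i k : ℕ) : ℝ≥0) ≤ (1 + #hS.toFinset * M ^ (2 * #hS.toFinset + 1)) *
      ((n : ℝ≥0) + 1) ^ (#hS.toFinset + 1) * x ^ n := by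
  set N := #hS.toFinset
  have hwalk : ∀ t, ∀ s ∈ hS.toFinset,
      (walkCount w t i s : ℝ≥0) ≤ M ^ (2 * N) * ((t : ℝ≥0) + 1) ^ N * x ^ t := fun t s hs => by
    simpa [walkCountIn_univ] using
      walkCountIn_union_compl_le hfin hout hx hM hdeg hclosed hS.toFinset (by simp) t i hs
  have hone : 1 ≤ ((n : ℝ≥0) + 1) ^ (N + 1) * x ^ n :=
    one_le_mul (one_le_pow₀ le_add_self) (one_le_pow₀ hx)
  rw [finsum_eq_sum _ (finite_walkCount_ne_zero hfin n i)]
  calc ((∑ k ∈ _, walkCount w n i k : ℕ) : ℝ≥0)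
      ≤ ((1 + ∑ t ∈ range (n + 1), ∑ s ∈ hS.toFinset,
          walkCount w t i s * max 1 (outDegree w s) : ℕ) : ℝ≥0) :=
        Nat.cast_le.2 (sum_walkCount_le hfin hout hS _ n i)
    _ ≤ 1 + ∑ t ∈ range (n + 1), ∑ s ∈ hS.toFinset,
          M ^ (2 * N) * ((n : ℝ≥0) + 1) ^ N * x ^ n * M := by
        push_cast
        gcongr with t ht s hs
        · exact (hwalk t s hs).trans (monotone_mul_pow hx _ _ (mem_range_succ_iff.1 ht))
        · exact max_le hM (hdeg s (hS.mem_toFinset.1 hs))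
    _ = 1 + N * M ^ (2 * N + 1) * (((n : ℝ≥0) + 1) ^ (N + 1) * x ^ n) := by
        simp only [sum_const, card_range, nsmul_eq_mul]
        push_cast
        ring
    _ ≤ _ := by
        rw [mul_assoc _ (((n : ℝ≥0) + 1) ^ (N + 1)), add_mul 1, one_mul]
        gcongr

end PathBound

section Growth

variable (hfin : ∀ u : V, {v | w u v ≠ 0}.Finite) {S : Set V} (hS : S.Finite)
  (hthrough : ∀ n, 1 ≤ n → ∀ i, walkCountIn w Sᶜ n i i = 0)
include hfin hS hthrough

lemma one_le_growthRate_finsum_walkCount_self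
    (hexists : ∃ n, 1 ≤ n ∧ ∃ i, walkCount w n i i ≠ 0) :
    1 ≤ growthRate fun n => ∑ᶠ j, walkCount w n j j := by
  obtain ⟨n, hn, i, hi⟩ := hexists
  refine one_le_growthRate (frequently_atTop.2 fun N => ⟨(N + 1) * n, by nlinarith, ?_⟩)
  exact (one_le_walkCount_mul hfin (Nat.one_le_iff_ne_zero.2 hi) (N + 1)).trans
    (walkCount_self_le_finsum hfin hS (hthrough _ (by nlinarith)) i)

lemma growthRate_finsum_walkCount_le (hout : ∀ u ∉ S, ∃ v₀, w u v₀ ≤ 1 ∧ ∀ v, v ≠ v₀ → w u v = 0)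
    (hcycle : 1 ≤ growthRate fun n => ∑ᶠ j, walkCount w n j j) (i : V) :
    growthRate (fun n => ∑ᶠ k, walkCount w n i k) ≤
      growthRate fun n => ∑ᶠ j, walkCount w n j j := by
  refine growthRate_le_of_forall_pow_bound hcycle fun x C hx hC => ?_
  set M : ℝ≥0 := 1 + C + ∑ s ∈ hS.toFinset, (outDegree w s : ℝ≥0)
  have hM : 1 ≤ M := le_add_right le_self_add
  have hdeg : ∀ s ∈ S, (outDegree w s : ℝ≥0) ≤ M := fun s hs =>
    (single_le_sum (f := fun s => (outDegree w s : ℝ≥0)) (fun _ _ => zero_le)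
      (hS.mem_toFinset.2 hs)).trans le_add_self
  have hclosed : ∀ s ∈ S, ∀ n, (walkCount w n s s : ℝ≥0) ≤ M * x ^ n := by
    rintro s - (_ | n)
    · simpa [walkCount] using hM
    · calc (walkCount w (n + 1) s s : ℝ≥0) ≤ C * x ^ (n + 1) :=
            (Nat.cast_le.2 (walkCount_self_le_finsum hfin hS (hthrough _ n.succ_pos) s)).trans
              (hC _)
        _ ≤ M * x ^ (n + 1) := by gcongr; exact le_add_right le_add_self
  exact ⟨_, _, fun n => finsum_walkCount_le hfin hout hx hM hdeg hclosed hS n i⟩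

end Growth

end

/-- For a directed multigraph with finite out-degrees admitting a finite subset `S` such that
every vertex outside `S` has out-degree and in-degree at most one, every closed directed walk
of positive length passes through `S`, and some closed directed walk of positive length exists:
the number `c(n)` of based closed directed walks of length `n ≥ 1` is finite, the number
`p(i,n)` of directed walks of length `n` starting at any vertex `i` is finite, the exponential
growth rate of `c(n)` equals the supremum over vertices `i` of the exponential growth rate of
`p(i,n)`, and this supremum is attained at some vertex of `S`. -/
theorem cycle_growth_eq_sup_path_growth {V : Type*} (w : V → V → ℕ)
    (hfin : ∀ u : V, {v | w u v ≠ 0}.Finite)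
    (S : Set V) (hS : S.Finite)
    (hdeg : ∀ u ∉ S,
      (∃ v₀, w u v₀ ≤ 1 ∧ ∀ v, v ≠ v₀ → w u v = 0) ∧
      (∃ x₀, w x₀ u ≤ 1 ∧ ∀ x, x ≠ x₀ → w x u = 0))
    (hthrough : ∀ n, 1 ≤ n → ∀ i, walkCountIn w Sᶜ n i i = 0)
    (hexists : ∃ n, 1 ≤ n ∧ ∃ i, walkCount w n i i ≠ 0) :
    (∀ n, 1 ≤ n → {i | walkCount w n i i ≠ 0}.Finite) ∧
    (∀ (i : V) (n : ℕ), {k | walkCount w n i k ≠ 0}.Finite) ∧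
    Filter.limsup
        (fun n : ℕ => ((∑ᶠ i, walkCount w n i i : ℕ) : ℝ≥0∞) ^ (1 / (n : ℝ)))
        Filter.atTop =
      (⨆ i : V, Filter.limsup
        (fun n : ℕ => ((∑ᶠ k, walkCount w n i k : ℕ) : ℝ≥0∞) ^ (1 / (n : ℝ)))
        Filter.atTop) ∧
    ∃ i₀ ∈ S, Filter.limsup
        (fun n : ℕ => ((∑ᶠ k, walkCount w n i₀ k : ℕ) : ℝ≥0∞) ^ (1 / (n : ℝ)))
        Filter.atTop =
      (⨆ i : V, Filter.limsup
        (fun n : ℕ => ((∑ᶠ k, walkCount w n i k : ℕ) : ℝ≥0∞) ^ (1 / (n : ℝ)))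
        Filter.atTop) := by
  have hcycle := one_le_growthRate_finsum_walkCount_self hfin hS hthrough hexists
  have hpath := growthRate_finsum_walkCount_le hfin hS hthrough (fun u hu => (hdeg u hu).1) hcycle
  have hsum := growthRate_le_sup_of_le_mul_sum hS.toFinset fun n hn =>
    finsum_walkCount_self_le hfin hS (hthrough n hn)
  have hne : hS.toFinset.Nonempty := nonempty_iff_ne_empty.2 fun h => by
    simpa [h] using hcycle.trans hsum
  obtain ⟨s, hs, hsup⟩ :=
    exists_mem_eq_sup _ hne fun s => growthRate fun n => ∑ᶠ k, walkCount w n s k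
  have hiSup : (⨆ i, growthRate fun n => ∑ᶠ k, walkCount w n i k) =
      growthRate fun n => ∑ᶠ j, walkCount w n j j :=
    le_antisymm (iSup_le hpath) (hsum.trans (hsup ▸ le_iSup_of_le s le_rfl))
  exact ⟨fun n hn => finite_walkCount_self_ne_zero hfin hS (hthrough n hn),
    fun i n => finite_walkCount_ne_zero hfin n i, hiSup.symm, s, hS.mem_toFinset.1 hs,
    (le_antisymm (hpath s) (hsup ▸ hsum)).trans hiSup.symm⟩
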